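/- Let ζ > 0 and ρ ∈ [−1,1], ρ ≠ 0. Suppose b ∈ ℝ satisfies both (ζ/2)b² − (ρ²ζ + ρ²/2)b + ((ζ+1)/2)ρ² ≤ 0 and (ζ/2 − ζ²ρ²/(2(ζ+1)))b² − (ρ²ζ²/(2(ζ+1)²))b³ ≤ 0 with b > 0. Then necessarily ρ² = 1 and b = (ζ+1)/ζ. -/
import Mathlib

lemma stmt8_aux (ζ r b : ℝ) (hζ : 0 < ζ) (hr0 : 0 < r) (hr1 : r ≤ 1) (hb : 0 < b)
    (hA : (ζ+1)*((ζ+1) - r*ζ) ≤ r*ζ*b)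
    (hB : ζ*b^2 - r*(2*ζ+1)*b + r*(ζ+1) ≤ 0) :
    r = 1 ∧ ζ * b = ζ + 1 := by
  have hz1 : (0:ℝ) < ζ + 1 := by linarith
  have hx : (0:ℝ) ≤ r*ζ*b - (ζ+1)*((ζ+1) - r*ζ) := by linarith
  have hy : (0:ℝ) ≤ r*ζ*b + (ζ+1)*((ζ+1) - r*ζ) - r^2*(2*ζ+1) := by
    have hr2 : r^2 ≤ 1 := by nlinarith
    nlinarith [hx, mul_nonneg (mul_nonneg hz1.le (sub_nonneg.2 hr1)) hζ.le,
      mul_nonneg (sub_nonneg.2 hr2) (by linarith : (0:ℝ) ≤ 2*ζ+1)]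
  have hF : (ζ+1)^2 * ((r-1) * (2*ζ*r^2 + (ζ^2-1)*r - (ζ+1)^2)) ≤ 0 := by
    nlinarith [mul_nonneg hx hy,
      mul_nonpos_of_nonneg_of_nonpos (by positivity : (0:ℝ) ≤ r^2*ζ) hB]
  have hK : 2*ζ*r^2 + (ζ^2-1)*r - (ζ+1)^2 < 0 := by
    nlinarith [mul_nonneg (mul_nonneg hζ.le hr0.le) (sub_nonneg.2 hr1)]
  have hr : r = 1 := by
    have h : 0 ≤ r - 1 := by
      by_contra h
      push_neg at h
      nlinarith [mul_pos (mul_pos hz1 hz1) (mul_pos_of_neg_of_neg (by linarith : r - 1 < 0) hK)]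
    linarith
  subst hr
  refine ⟨rfl, le_antisymm ?_ ?_⟩
  · nlinarith [hB]
  · nlinarith [hA]

/-- The two polynomial inequalities from the wAB-condition analysis force
`ρ² = 1` and `b = (ζ+1)/ζ`. -/
theorem stmt8 (ζ ρ b : ℝ) (hζ : 0 < ζ) (hρ : ρ ∈ Set.Icc (-1 : ℝ) 1) (hρ0 : ρ ≠ 0)
    (hb : 0 < b)
    (h1 : ζ / 2 * b ^ 2 - (ρ ^ 2 * ζ + ρ ^ 2 / 2) * b + (ζ + 1) / 2 * ρ ^ 2 ≤ 0)
    (h2 : (ζ / 2 - ζ ^ 2 * ρ ^ 2 / (2 * (ζ + 1))) * b ^ 2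
        - ρ ^ 2 * ζ ^ 2 / (2 * (ζ + 1) ^ 2) * b ^ 3 ≤ 0) :
    ρ ^ 2 = 1 ∧ b = (ζ + 1) / ζ := by
  obtain ⟨hρl, hρu⟩ := hρ
  have hr0 : 0 < ρ ^ 2 := by positivity
  have hr1 : ρ ^ 2 ≤ 1 := by nlinarith
  have hz1 : (0:ℝ) < ζ + 1 := by linarith
  have hne : (ζ+1) ≠ 0 := ne_of_gt hz1
  have key : ζ * b^2 * ((ζ+1)^2 - ρ^2*ζ*(ζ+1) - ρ^2*ζ*b)
      = 2*(ζ+1)^2 * ((ζ / 2 - ζ ^ 2 * ρ ^ 2 / (2 * (ζ + 1))) * b ^ 2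
        - ρ ^ 2 * ζ ^ 2 / (2 * (ζ + 1) ^ 2) * b ^ 3) := by
    field_simp
  have h2' : ζ * b^2 * ((ζ+1)^2 - ρ^2*ζ*(ζ+1) - ρ^2*ζ*b) ≤ 0 := by
    rw [key]
    exact mul_nonpos_of_nonneg_of_nonpos (by positivity) h2
  have hA : (ζ+1)*((ζ+1) - ρ^2*ζ) ≤ ρ^2*ζ*b := by
    nlinarith [h2', mul_pos hζ (pow_pos hb 2)]
  have hB : ζ*b^2 - ρ^2*(2*ζ+1)*b + ρ^2*(ζ+1) ≤ 0 := by nlinarith [h1]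
  obtain ⟨hr, hbv⟩ := stmt8_aux ζ (ρ^2) b hζ hr0 hr1 hb hA hB
  refine ⟨hr, ?_⟩
  field_simp
  linarith
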